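/- PSL(2,Z) is isomorphic to the free product Z/2 * Z/3, and hence (by the ping-pong construction for demonstrative cyclic groups) embeds into the group of homeomorphisms of the Cantor set: there exist homeomorphisms g, h of {0,1}^ℕ with g² = id, h³ = id, and ⟨g,h⟩ ≅ Z/2 * Z/3. -/

import Mathlib

/-- The group of self-homeomorphisms of a topological space, with
`(f * g) x = f (g x)`. -/
instance homeoGroup {X : Type*} [TopologicalSpace X] : Group (X ≃ₜ X) where
  mul f g := g.trans f
  one := Homeomorph.refl X
  inv := Homeomorph.symm
  mul_assoc _ _ _ := Homeomorph.ext fun _ => rfl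
  one_mul _ := Homeomorph.ext fun _ => rfl
  mul_one _ := Homeomorph.ext fun _ => rfl
  inv_mul_cancel f := Homeomorph.ext fun x => f.symm_apply_apply x

/-- The Cantor set `{0,1}^ℕ`. -/
abbrev Cantor : Type := ℕ → Bool

/-!
`PSL(2, ℤ)` acts on the upper half plane, `S` by `z ↦ -1/z` and `ST` by `z ↦ -1/(z + 1)`.
`S` maps the left half plane `re < 0` into the right half plane, while `ST` and
`(ST)⁻¹ : z ↦ -1/z - 1` map the right half plane into the left one. By the ping-pong lemma the map
`Z/2 ∗ Z/3 → PSL(2, ℤ)` sending the generators to `S` and `ST` is injective, and it is onto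
because `S` and `T = S⁻¹ (ST)` generate `SL(2, ℤ)`.

A countable group `G` acts faithfully on itself by left translation; extending these permutations
along an injection `G ↪ ℕ` and permuting the coordinates of `ℕ → Bool` accordingly embeds `G`
into the homeomorphism group of the Cantor set.
-/

open scoped MatrixGroups Pointwise

universe u

section ZModPowersHom

variable {G : Type*} [Group G]

def zmodPowersHom (n : ℕ) (a : G) (ha : a ^ n = 1) : Multiplicative (ZMod n) →* G :=
  AddMonoidHom.toMultiplicativeLeft <|
    ZMod.lift n ⟨zmultiplesHom (Additive G) (Additive.ofMul a), by simp [← ofMul_pow, ha]⟩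

theorem zmodPowersHom_ofAdd_intCast (n : ℕ) (a : G) (ha : a ^ n = 1) (k : ℤ) :
    zmodPowersHom n a ha (.ofAdd k) = a ^ k :=
  congrArg Additive.toMul (ZMod.lift_coe n _ k)

@[simp]
theorem zmodPowersHom_ofAdd_one (n : ℕ) (a : G) (ha : a ^ n = 1) :
    zmodPowersHom n a ha (.ofAdd 1) = a := by
  simpa using zmodPowersHom_ofAdd_intCast n a ha 1

end ZModPowersHom

namespace Monoid.Coprod

variable {G₁ G₂ : Type u} [Group G₁] [Group G₂]

/- `G₁ ∗ G₂` is compared with the free product of the `Bool`-indexed family `false ↦ G₁`,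
`true ↦ G₂`, for which Mathlib has the ping-pong lemma. -/
instance instGroupCond : ∀ b : Bool, Group (cond b G₂ G₁)
  | false => ‹Group G₁›
  | true => ‹Group G₂›

def toCoprodI : Coprod G₁ G₂ →* CoprodI (fun b => cond b G₂ G₁) :=
  lift (CoprodI.of (M := fun b => cond b G₂ G₁) (i := false))
    (CoprodI.of (M := fun b => cond b G₂ G₁) (i := true))

def ofCoprodI : CoprodI (fun b => cond b G₂ G₁) →* Coprod G₁ G₂ :=
  CoprodI.lift fun
    | false => inl
    | true => inr

theorem ofCoprodI_comp_toCoprodI :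
    ofCoprodI.comp toCoprodI = MonoidHom.id (Coprod G₁ G₂) := by
  ext <;> simp [toCoprodI, ofCoprodI]

theorem toCoprodI_injective : Function.Injective (toCoprodI (G₁ := G₁) (G₂ := G₂)) :=
  Function.LeftInverse.injective (g := ofCoprodI) (DFunLike.congr_fun ofCoprodI_comp_toCoprodI)

theorem lift_injective_of_ping_pong {G α : Type*} [Group G] [MulAction G α]
    (f₁ : G₁ →* G) (f₂ : G₂ →* G) (hcard : 3 ≤ Cardinal.mk G₂) {X₁ X₂ : Set α}
    (hX₁ : X₁.Nonempty) (hX₂ : X₂.Nonempty) (hdisj : Disjoint X₁ X₂)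
    (h₁ : ∀ g ≠ 1, f₁ g • X₂ ⊆ X₁) (h₂ : ∀ g ≠ 1, f₂ g • X₁ ⊆ X₂) :
    Function.Injective (lift f₁ f₂) := by
  let f : ∀ b, cond b G₂ G₁ →* G
    | false => f₁
    | true => f₂
  have hlift : lift f₁ f₂ = (CoprodI.lift f).comp toCoprodI := by
    ext <;> simp [toCoprodI, f]
  rw [hlift, MonoidHom.coe_comp]
  refine .comp (CoprodI.lift_injective_of_ping_pong f (.inr ⟨true, hcard⟩)
    (fun b => cond b X₂ X₁) (by simp [hX₁, hX₂]) ?_ ?_) toCoprodI_injective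
  · rintro (_ | _) (_ | _) hne <;> simp_all [Function.onFun, disjoint_comm]
  · rintro (_ | _) (_ | _) hne <;> simp_all [f]

end Monoid.Coprod

theorem Matrix.SpecialLinearGroup.neg_one_mem_center {n R : Type*} [DecidableEq n] [Fintype n]
    [CommRing R] [Fact (Even (Fintype.card n))] :
    (-1 : SpecialLinearGroup n R) ∈ Subgroup.center (SpecialLinearGroup n R) :=
  Subgroup.mem_center_iff.2 fun g => by simp

namespace ModularGroup

open UpperHalfPlane

noncomputable instance : MulAction PSL(2, ℤ) ℍ :=
  MulAction.compHom ℍ <|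
    (Matrix.ProjGenLinGroup.map (Int.castRingHom ℝ)).comp Matrix.ProjectiveSpecialLinearGroup.toPGL

@[simp]
theorem psl_mk_smul (g : SL(2, ℤ)) (z : ℍ) : (QuotientGroup.mk g : PSL(2, ℤ)) • z = g • z := rfl

theorem re_S_smul (z : ℍ) : (S • z).re = -z.re / Complex.normSq z := by
  rw [modular_S_smul, ← coe_re, coe_mk, Complex.inv_re, Complex.normSq_neg, Complex.neg_re, coe_re]

theorem re_S_smul_neg {z : ℍ} (hz : 0 < z.re) : (S • z).re < 0 := by
  rw [re_S_smul]
  exact div_neg_of_neg_of_pos (neg_neg_of_pos hz) (Complex.normSq_pos.2 z.ne_zero)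

theorem re_S_smul_pos {z : ℍ} (hz : z.re < 0) : 0 < (S • z).re := by
  rw [re_S_smul]
  exact div_pos (neg_pos.2 hz) (Complex.normSq_pos.2 z.ne_zero)

def pslS : PSL(2, ℤ) := QuotientGroup.mk S

def pslST : PSL(2, ℤ) := QuotientGroup.mk (S * T)

theorem pslS_sq : pslS ^ 2 = 1 := by
  rw [pslS, ← QuotientGroup.mk_pow, QuotientGroup.eq_one_iff, (by decide : S ^ 2 = -1)]
  exact Matrix.SpecialLinearGroup.neg_one_mem_center

theorem pslST_pow_three : pslST ^ 3 = 1 := by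
  rw [pslST, ← QuotientGroup.mk_pow, QuotientGroup.eq_one_iff, (by decide : (S * T) ^ 3 = -1)]
  exact Matrix.SpecialLinearGroup.neg_one_mem_center

theorem re_pslST_smul_neg {z : ℍ} (hz : 0 < z.re) : (pslST • z).re < 0 := by
  rw [pslST, psl_mk_smul, mul_smul]
  apply re_S_smul_neg
  rw [re_T_smul]
  linarith

theorem re_pslST_inv_smul_neg {z : ℍ} (hz : 0 < z.re) : (pslST⁻¹ • z).re < 0 := by
  rw [pslST, ← QuotientGroup.mk_inv, psl_mk_smul, mul_inv_rev, mul_smul, S_inv, SL_neg_smul,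
    re_T_inv_smul]
  linarith [re_S_smul_neg hz]

noncomputable def coprodToPSL :
    Monoid.Coprod (Multiplicative (ZMod 2)) (Multiplicative (ZMod 3)) →* PSL(2, ℤ) :=
  Monoid.Coprod.lift (zmodPowersHom 2 pslS pslS_sq) (zmodPowersHom 3 pslST pslST_pow_three)

theorem coprodToPSL_injective : Function.Injective coprodToPSL := by
  refine Monoid.Coprod.lift_injective_of_ping_pong _ _ (by simp)
    (X₁ := {z : ℍ | 0 < z.re}) (X₂ := {z : ℍ | z.re < 0})
    ⟨(1 : ℝ) +ᵥ I, by simp⟩ ⟨(-1 : ℝ) +ᵥ I, by simp⟩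
    (Set.disjoint_left.2 fun z (h₁ : 0 < z.re) (h₂ : z.re < 0) => lt_asymm h₁ h₂) ?_ ?_
  · intro g hg
    obtain rfl : g = .ofAdd 1 := by revert g; decide
    exact Set.smul_set_subset_iff.2 fun z hz => by simpa [pslS] using re_S_smul_pos hz
  · intro g hg
    obtain rfl | rfl : g = .ofAdd 1 ∨ g = (.ofAdd 1)⁻¹ := by revert g; decide
    · exact Set.smul_set_subset_iff.2 fun z hz => by simpa using re_pslST_smul_neg hz
    · exact Set.smul_set_subset_iff.2 fun z hz => by simpa using re_pslST_inv_smul_neg hz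

theorem coprodToPSL_surjective : Function.Surjective coprodToPSL := by
  have hS : QuotientGroup.mk S ∈ coprodToPSL.range :=
    ⟨Monoid.Coprod.inl (.ofAdd 1), by simp [coprodToPSL, pslS]⟩
  have hST : QuotientGroup.mk (S * T) ∈ coprodToPSL.range :=
    ⟨Monoid.Coprod.inr (.ofAdd 1), by simp [coprodToPSL, pslST]⟩
  have hT : QuotientGroup.mk T ∈ coprodToPSL.range := by
    simpa using mul_mem (inv_mem hS) hST
  have hgen : Subgroup.closure {S, T} ≤
      coprodToPSL.range.comap (QuotientGroup.mk' (Subgroup.center SL(2, ℤ))) :=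
    (Subgroup.closure_le _).2 (Set.insert_subset hS (Set.singleton_subset_iff.2 hT))
  intro x
  obtain ⟨g, rfl⟩ := QuotientGroup.mk_surjective x
  exact hgen (SpecialLinearGroup.SL2Z_generators ▸ Subgroup.mem_top g)

noncomputable def pslEquivCoprod :
    PSL(2, ℤ) ≃* Monoid.Coprod (Multiplicative (ZMod 2)) (Multiplicative (ZMod 3)) :=
  (MulEquiv.ofBijective coprodToPSL ⟨coprodToPSL_injective, coprodToPSL_surjective⟩).symm

end ModularGroup

instance Monoid.Coprod.instCountable {M N : Type*} [MulOneClass M] [MulOneClass N]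
    [Countable M] [Countable N] : Countable (Monoid.Coprod M N) :=
  have : Countable (FreeMonoid (M ⊕ N)) := FreeMonoid.toList.injective.countable
  Monoid.Coprod.mk_surjective.countable

namespace Homeomorph

def permCoordinates (ι X : Type*) [TopologicalSpace X] : Equiv.Perm ι →* ((ι → X) ≃ₜ (ι → X)) where
  toFun σ :=
    { toEquiv := σ.arrowCongr (Equiv.refl X)
      continuous_toFun := continuous_pi fun _ => continuous_apply _
      continuous_invFun := continuous_pi fun _ => continuous_apply _ }
  map_one' := rfl
  map_mul' _ _ := rfl

@[simp]
theorem permCoordinates_apply (ι X : Type*) [TopologicalSpace X] (σ : Equiv.Perm ι) (x : ι → X)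
    (i : ι) : permCoordinates ι X σ x i = x (σ.symm i) :=
  rfl

theorem permCoordinates_injective (ι X : Type*) [TopologicalSpace X] [Nontrivial X] :
    Function.Injective (permCoordinates ι X) := by
  classical
  intro σ τ h
  obtain ⟨a, b, hab⟩ := exists_pair_ne X
  have hsymm : ∀ i, σ.symm i = τ.symm i := fun i => by
    have := congrArg (fun f : (ι → X) ≃ₜ (ι → X) => f (fun j => if j = σ.symm i then b else a) i) h
    by_contra hne
    exact hab.symm (by simpa [Ne.symm hne] using this)
  exact Equiv.symm_bijective.injective (Equiv.ext hsymm)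

theorem exists_injective_monoidHom_pi_nat (G : Type*) [Group G] [Countable G]
    (X : Type*) [TopologicalSpace X] [Nontrivial X] :
    ∃ φ : G →* ((ℕ → X) ≃ₜ (ℕ → X)), Function.Injective φ := by
  obtain ⟨e⟩ := nonempty_embedding_nat G
  exact ⟨(permCoordinates ℕ X).comp ((Equiv.Perm.viaEmbeddingHom e).comp (MulAction.toPermHom G G)),
    (permCoordinates_injective ℕ X).comp
      ((Equiv.Perm.viaEmbeddingHom_injective e).comp MulAction.toPerm_injective)⟩

end Homeomorph

/-- `PSL(2,ℤ) ≅ Z/2 * Z/3`, and this group embeds into the homeomorphism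
group of the Cantor set: there are homeomorphisms `g, h` of `{0,1}^ℕ` of
orders exactly `2` and `3` such that the canonical map
`Z/2 * Z/3 → Homeo({0,1}^ℕ)` determined by `g` and `h` is injective. -/
theorem psl2z_embeds_homeo_cantor :
    Nonempty (Matrix.ProjectiveSpecialLinearGroup (Fin 2) ℤ ≃*
      Monoid.Coprod (Multiplicative (ZMod 2)) (Multiplicative (ZMod 3))) ∧
    ∃ g h : Cantor ≃ₜ Cantor, orderOf g = 2 ∧ orderOf h = 3 ∧
      ∃ φ : Monoid.Coprod (Multiplicative (ZMod 2)) (Multiplicative (ZMod 3)) →*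
          (Cantor ≃ₜ Cantor),
        φ (Monoid.Coprod.inl (Multiplicative.ofAdd (1 : ZMod 2))) = g ∧
        φ (Monoid.Coprod.inr (Multiplicative.ofAdd (1 : ZMod 3))) = h ∧
        Function.Injective φ := by
  obtain ⟨φ, hφ⟩ := Homeomorph.exists_injective_monoidHom_pi_nat
    (Monoid.Coprod (Multiplicative (ZMod 2)) (Multiplicative (ZMod 3))) Bool
  refine ⟨⟨ModularGroup.pslEquivCoprod⟩, _, _, ?_, ?_, φ, rfl, rfl, hφ⟩
  · rw [orderOf_injective φ hφ, orderOf_injective _ Monoid.Coprod.inl_injective,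
      orderOf_ofAdd_eq_addOrderOf, ZMod.addOrderOf_one]
  · rw [orderOf_injective φ hφ, orderOf_injective _ Monoid.Coprod.inr_injective,
      orderOf_ofAdd_eq_addOrderOf, ZMod.addOrderOf_one]
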